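/- Let R be a commutative ring, I an ideal, J an ideal and x ∈ R with J + (x) ⊆ I. Assume I² ∩ (J + (x)) = J·I + x·I and (J :_R x) ∩ I = J. Then I² ∩ J = J·I. -/

import Mathlib

open Pointwise

namespace Ideal

variable {R : Type*} [CommRing R]

theorem smul_inf_eq_smul_colon_inf (I J : Ideal R) (x : R) :
    x • I ⊓ J = x • (Submodule.colon J (span {x}) ⊓ I) := by
  ext a
  simp only [Submodule.mem_inf, Submodule.mem_smul_pointwise_iff_exists,
    Submodule.mem_colon_span_singleton, smul_eq_mul]
  constructor
  · rintro ⟨⟨b, hbI, rfl⟩, hxbJ⟩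
    exact ⟨b, ⟨by rwa [mul_comm], hbI⟩, rfl⟩
  · rintro ⟨b, ⟨hbJ, hbI⟩, rfl⟩
    exact ⟨⟨b, hbI, rfl⟩, by rwa [mul_comm]⟩

theorem smul_le_mul_of_mem {I : Ideal R} {x : R} (hx : x ∈ I) (J : Ideal R) :
    x • J ≤ J * I := by
  rw [← Submodule.span_singleton_mul, mul_comm]
  exact mul_mono_right ((span_singleton_le_iff_mem I).mpr hx)

/-- By the modular law (`J * I ≤ J`) only `x • I ⊓ J = x • ((J : x) ⊓ I) = x • J` remains,
and it lies in `J * I`. -/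
theorem mul_sup_smul_inf_eq_mul {I J : Ideal R} {x : R} (hx : x ∈ I)
    (hcolon : Submodule.colon J (span {x}) ⊓ I = J) :
    (J * I + x • I) ⊓ J = J * I := by
  rw [Submodule.add_eq_sup, sup_inf_assoc_of_le _ mul_le_left, smul_inf_eq_smul_colon_inf,
    hcolon]
  exact sup_eq_left.mpr (smul_le_mul_of_mem hx J)

end Ideal

theorem stmt4 {R : Type*} [CommRing R] (I J : Ideal R) (x : R)
    (hx : J + Ideal.span {x} ≤ I)
    (h1 : I ^ 2 ⊓ (J + Ideal.span {x}) = J * I + x • I)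
    (h2 : Submodule.colon J (Ideal.span {x}) ⊓ I = J) :
    I ^ 2 ⊓ J = J * I := by
  have hxI : x ∈ I := hx (Submodule.mem_sup_right (Ideal.mem_span_singleton_self x))
  have hJ : J ≤ J + Ideal.span {x} := le_sup_left
  calc I ^ 2 ⊓ J = I ^ 2 ⊓ (J + Ideal.span {x}) ⊓ J := by rw [inf_assoc, inf_eq_right.mpr hJ]
    _ = J * I := by rw [h1, Ideal.mul_sup_smul_inf_eq_mul hxI h2]
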